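/- Global solutions of the Riccati equation are bounded by the curvature bound: let K₀ ≥ 0 and let K : ℝ → ℝ be continuous with −K₀ ≤ K(t) ≤ 0 for all t ∈ ℝ. If U : ℝ → ℝ is differentiable and satisfies U'(t) + U(t)² + K(t) = 0 for all t ∈ ℝ, then |U(t)| ≤ √K₀ for all t ∈ ℝ. -/

import Mathlib

/-!
The Riccati equation and `K ≥ -K₀` give the differential inequality `U' ≤ K₀ - U²`, which is
also satisfied by the reflected solution `t ↦ -U (-t)`; so it suffices to show that a function
on all of `ℝ` with `f' ≤ c - f²` never drops below `-√c`. If `f t₀ = a < -√c`, then `f' < 0`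
on the level `f = a`, so `f ≤ a` on `[t₀, ∞)`. There `f' ≤ -ε f²` with `ε = 1 - c / a² > 0`,
hence `1 / f` grows at least like `ε t`; being negative, it cannot do so for all time, so `f`
would blow up to `-∞` in finite time.
-/

open Set

variable {f : ℝ → ℝ} {c : ℝ}

theorem le_of_deriv_le_sub_sq {a t₀ : ℝ} (hf : Differentiable ℝ f)
    (hf' : ∀ t, deriv f t ≤ c - f t ^ 2) (hca : c < a ^ 2) (h₀ : f t₀ ≤ a) :
    ∀ t ∈ Ici t₀, f t ≤ a := by
  intro t ht
  refine image_le_of_deriv_right_lt_deriv_boundary (B := fun _ ↦ a) (B' := 0)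
    hf.continuous.continuousOn (fun x _ ↦ (hf x).hasDerivAt.hasDerivWithinAt) h₀
    (fun _ ↦ hasDerivAt_const _ _) (fun x _ hx ↦ ?_) ⟨ht, le_rfl⟩
  have := hf' x
  simp only [Pi.zero_apply, hx] at this ⊢
  linarith

theorem mul_sub_le_inv_sub_inv_of_deriv_le {ε t₀ : ℝ} (hf : Differentiable ℝ f)
    (hne : ∀ t ∈ Ici t₀, f t ≠ 0) (hf' : ∀ t ∈ Ici t₀, deriv f t ≤ -ε * f t ^ 2) :
    ∀ t ∈ Ici t₀, ε * (t - t₀) ≤ (f t)⁻¹ - (f t₀)⁻¹ := by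
  have hinv : ∀ t ∈ Ici t₀, HasDerivAt (fun s ↦ (f s)⁻¹) (-deriv f t / f t ^ 2) t :=
    fun t ht ↦ (hf t).hasDerivAt.inv (hne t ht)
  refine fun t ht ↦ (convex_Ici t₀).mul_sub_le_image_sub_of_le_deriv
    (fun s hs ↦ (hinv s hs).continuousAt.continuousWithinAt)
    (fun s hs ↦ (hinv s (interior_subset hs)).differentiableAt.differentiableWithinAt)
    (fun s hs ↦ ?_) t₀ self_mem_Ici t ht ht
  have hs' := interior_subset hs
  rw [(hinv s hs').deriv, le_div_iff₀ (sq_pos_of_ne_zero (hne s hs'))]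
  linarith [hf' s hs']

theorem sub_sq_le_neg_mul_sq {a x : ℝ} (hc : 0 ≤ c) (ha : a ≠ 0) (hax : a ^ 2 ≤ x ^ 2) :
    c - x ^ 2 ≤ -(1 - c / a ^ 2) * x ^ 2 := by
  have hc' : c ≤ c / a ^ 2 * x ^ 2 := by
    rw [div_mul_eq_mul_div, le_div_iff₀ (sq_pos_of_ne_zero ha)]
    exact mul_le_mul_of_nonneg_left hax hc
  linarith

theorem neg_sqrt_le_of_deriv_le_sub_sq (hc : 0 ≤ c) (hf : Differentiable ℝ f)
    (hf' : ∀ t, deriv f t ≤ c - f t ^ 2) (t₀ : ℝ) : -√c ≤ f t₀ := by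
  by_contra! h
  set a := f t₀
  have ha : a < 0 := h.trans_le (neg_nonpos.mpr (Real.sqrt_nonneg c))
  have hca : c < a ^ 2 := by
    simpa using Real.lt_sq_of_sqrt_lt (by linarith : √c < -a)
  have hfa := le_of_deriv_le_sub_sq hf hf' hca le_rfl
  set ε := 1 - c / a ^ 2
  have hε : 0 < ε := by rwa [sub_pos, div_lt_one (sq_pos_of_neg ha)]
  have hgrow := mul_sub_le_inv_sub_inv_of_deriv_le (ε := ε) hf
    (fun t ht ↦ ((hfa t ht).trans_lt ha).ne)
    (fun t ht ↦ (hf' t).trans <| sub_sq_le_neg_mul_sq hc ha.ne (by nlinarith [hfa t ht]))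
  have hT : t₀ - a⁻¹ / ε ∈ Ici t₀ :=
    mem_Ici.2 (by linarith [div_neg_of_neg_of_pos (inv_lt_zero.2 ha) hε])
  have hblowup := hgrow _ hT
  rw [sub_sub_cancel_left, mul_neg, mul_div_cancel₀ _ hε.ne'] at hblowup
  linarith [inv_lt_zero.2 ((hfa _ hT).trans_lt ha)]

theorem riccati_global_solution_bounded
    (K₀ : ℝ) (hK₀ : 0 ≤ K₀) (K : ℝ → ℝ)
    (hKbound : ∀ t : ℝ, -K₀ ≤ K t ∧ K t ≤ 0)
    (U : ℝ → ℝ) (hU : Differentiable ℝ U)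
    (hRic : ∀ t : ℝ, deriv U t + (U t) ^ 2 + K t = 0) :
    ∀ t : ℝ, |U t| ≤ Real.sqrt K₀ := by
  have hU' : ∀ t, deriv U t ≤ K₀ - U t ^ 2 := fun t ↦ by linarith [hRic t, (hKbound t).1]
  have hV : Differentiable ℝ (fun t ↦ -U (-t)) := (hU.comp differentiable_neg).neg
  have hV' : ∀ t, deriv (fun t ↦ -U (-t)) t ≤ K₀ - (-U (-t)) ^ 2 := fun t ↦ by
    simpa [deriv_comp_neg] using hU' (-t)
  intro t
  have hupper := neg_sqrt_le_of_deriv_le_sub_sq hK₀ hV hV' (-t)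
  rw [neg_neg] at hupper
  exact abs_le.mpr ⟨neg_sqrt_le_of_deriv_le_sub_sq hK₀ hU hU' t, by linarith⟩
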